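/- (Modified Lemma 1, interior point) Let W_A and W_1, …, W_l be subspaces of V, and let r ≥ 1. Partition {1,…,l} into disjoint groups R_1, …, R_t each of size r (t ≥ 1) together with a remainder set R' of size strictly less than r. Assume: (modified L2) for every S ⊆ {1,…,l} with |S| ≤ 2r−1, I(W_A ; W_S) = 0; (modified L3) for all pairwise disjoint subsets B_1, B_2, B_3 ⊆ {1,…,l} with |B_3| = r, I(W_A ; W_{B_1} | W_{B_2} + W_{B_3}) = I(W_A ; W_{B_1} | W_{B_3}). Then I(W_A ; W_{{1,…,l}}) = Σ_{j=2}^t I(W_A ; W_{R_j} | W_{R_1}). -/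

import Mathlib

/-- Mutual information of two subspaces: `I(A;B) = dim A + dim B − dim(A+B)`. -/
noncomputable def mi (F : Type*) {V : Type*} [Field F] [AddCommGroup V] [Module F V]
    (A B : Submodule F V) : ℤ :=
  (Module.finrank F A : ℤ) + Module.finrank F B - Module.finrank F (A ⊔ B : Submodule F V)

/-- Conditional mutual information of subspaces:
`I(A;B|C) = dim(A+C) + dim(B+C) − dim(A+B+C) − dim C`. -/
noncomputable def cmi (F : Type*) {V : Type*} [Field F] [AddCommGroup V] [Module F V]
    (A B C : Submodule F V) : ℤ :=
  (Module.finrank F (A ⊔ C : Submodule F V) : ℤ) + Module.finrank F (B ⊔ C : Submodule F V)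
    - Module.finrank F (A ⊔ B ⊔ C : Submodule F V) - Module.finrank F C

/-
The chain rule `I(A; X + Y) = I(A; Y) + I(A; X | Y)` peels the groups R_j (j ≥ 2) off one at a
time from `W_{R_1} + W_{R'}`. Modified (L3), with `B₃ = R_1`, turns each increment into
`I(A; W_{R_j} | W_{R_1})`, whatever groups are still present, and modified (L2) kills the
remaining term `I(A; W_{R_1 ∪ R'})`, as `|R_1 ∪ R'| ≤ 2r − 1`.
-/

section ChainRule

variable {F V : Type*} [Field F] [AddCommGroup V] [Module F V]

theorem mi_sup_eq_mi_add_cmi (A X Y : Submodule F V) :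
    mi F A (X ⊔ Y) = mi F A Y + cmi F A X Y := by
  unfold mi cmi
  rw [← sup_assoc]
  ring

theorem mi_finset_sup_sup_eq_add_sum {κ : Type*} [DecidableEq κ]
    (A K : Submodule F V) (X : κ → Submodule F V) (c : κ → ℤ) (J : Finset κ)
    (hc : ∀ j ∈ J, ∀ D ⊆ J.erase j, cmi F A (X j) (D.sup X ⊔ K) = c j) :
    mi F A (J.sup X ⊔ K) = mi F A K + ∑ j ∈ J, c j := by
  induction J using Finset.induction_on with
  | empty => simp
  | @insert a J haJ ih =>
    have hcJ : ∀ j ∈ J, ∀ D ⊆ J.erase j, cmi F A (X j) (D.sup X ⊔ K) = c j :=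
      fun j hj D hD => hc j (Finset.mem_insert_of_mem hj) D
        (hD.trans (Finset.erase_subset_erase j (Finset.subset_insert a J)))
    have hca : cmi F A (X a) (J.sup X ⊔ K) = c a :=
      hc a (Finset.mem_insert_self a J) J (by rw [Finset.erase_insert haJ])
    rw [Finset.sup_insert, sup_assoc, mi_sup_eq_mi_add_cmi, ih hcJ, hca,
      Finset.sum_insert haJ]
    ring

end ChainRule

theorem modified_lemma1_groupwise_decomposition_general
    (F V : Type*) [Field F] [AddCommGroup V] [Module F V]
    (l t r : ℕ) (ht : 0 < t)
    (WA : Submodule F V) (W : Fin l → Submodule F V)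
    (R : Fin t → Finset (Fin l)) (R' : Finset (Fin l))
    (hcard : ∀ j : Fin t, (R j).card = r) (hcard' : R'.card < r)
    (hdisj : ∀ j j' : Fin t, j ≠ j' → Disjoint (R j) (R j'))
    (hdisj' : ∀ j : Fin t, Disjoint (R j) R')
    (hcover : Finset.univ.biUnion R ∪ R' = (Finset.univ : Finset (Fin l)))
    (hL2 : ∀ S : Finset (Fin l), S.card ≤ 2 * r - 1 → mi F WA (S.sup W) = 0)
    (hL3 : ∀ B₁ B₂ B₃ : Finset (Fin l), Disjoint B₁ B₂ → Disjoint B₁ B₃ →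
      Disjoint B₂ B₃ → B₃.card = r →
      cmi F WA (B₁.sup W) (B₂.sup W ⊔ B₃.sup W) = cmi F WA (B₁.sup W) (B₃.sup W)) :
    mi F WA ((Finset.univ : Finset (Fin l)).sup W)
      = ∑ j ∈ Finset.univ.erase (⟨0, ht⟩ : Fin t),
          cmi F WA ((R j).sup W) ((R ⟨0, ht⟩).sup W) := by
  classical
  set z : Fin t := ⟨0, ht⟩
  set X : Fin t → Submodule F V := fun j => (R j).sup W
  have hdisj_biUnion : ∀ (j : Fin t) (D : Finset (Fin t)), j ∉ D → Disjoint (R j) (D.biUnion R) :=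
    fun j D hj => Finset.disjoint_biUnion_right _ _ _ |>.mpr
      fun i hi => hdisj j i (ne_of_mem_of_not_mem hi hj).symm
  have hsup_biUnion : ∀ D : Finset (Fin t), D.sup X = (D.biUnion R).sup W :=
    fun D => (Finset.sup_biUnion D R).symm
  have hbase : mi F WA ((R z ∪ R').sup W) = 0 :=
    hL2 _ ((Finset.card_union_le _ _).trans (by rw [hcard z]; omega))
  have hincrement : ∀ j ∈ Finset.univ.erase z, ∀ D ⊆ (Finset.univ.erase z).erase j,
      cmi F WA (X j) (D.sup X ⊔ (R z ∪ R').sup W) = cmi F WA (X j) (X z) := by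
    intro j hj D hD
    have hjD : j ∉ D := fun h => Finset.notMem_erase j _ (hD h)
    have hzD : z ∉ D := fun h => Finset.notMem_erase z _ (Finset.mem_of_mem_erase (hD h))
    have hjz : j ≠ z := Finset.ne_of_mem_erase hj
    have h := hL3 (R j) (D.biUnion R ∪ R') (R z)
      (Finset.disjoint_union_right.mpr ⟨hdisj_biUnion j D hjD, hdisj' j⟩) (hdisj j z hjz)
      (Finset.disjoint_union_left.mpr ⟨(hdisj_biUnion z D hzD).symm, (hdisj' z).symm⟩)
      (hcard z)
    rw [Finset.sup_union, sup_right_comm] at h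
    rwa [hsup_biUnion, Finset.sup_union, ← sup_assoc]
  have hcover' : (Finset.univ.erase z).sup X ⊔ (R z ∪ R').sup W = Finset.univ.sup W := by
    rw [hsup_biUnion, ← Finset.sup_union, ← Finset.union_assoc, Finset.union_comm _ (R z),
      ← Finset.biUnion_insert, Finset.insert_erase (Finset.mem_univ z), hcover]
  rw [← hcover', mi_finset_sup_sup_eq_add_sum WA _ X _ _ hincrement, hbase, zero_add]

/-- Modified Lemma 1, interior point: under modified (L2) and
modified (L3), `I(W_A ; W_{{1,…,l}}) = Σ_{j=2}^t I(W_A ; W_{R_j} | W_{R_1})`. -/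
theorem modified_lemma1_groupwise_decomposition
    (F V : Type*) [Field F] [AddCommGroup V] [Module F V] [FiniteDimensional F V]
    (l t r : ℕ) (hr : 1 ≤ r) (ht : 0 < t)
    (WA : Submodule F V) (W : Fin l → Submodule F V)
    (R : Fin t → Finset (Fin l)) (R' : Finset (Fin l))
    (hcard : ∀ j : Fin t, (R j).card = r) (hcard' : R'.card < r)
    (hdisj : ∀ j j' : Fin t, j ≠ j' → Disjoint (R j) (R j'))
    (hdisj' : ∀ j : Fin t, Disjoint (R j) R')
    (hcover : Finset.univ.biUnion R ∪ R' = (Finset.univ : Finset (Fin l)))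
    (hL2 : ∀ S : Finset (Fin l), S.card ≤ 2 * r - 1 → mi F WA (S.sup W) = 0)
    (hL3 : ∀ B₁ B₂ B₃ : Finset (Fin l), Disjoint B₁ B₂ → Disjoint B₁ B₃ →
      Disjoint B₂ B₃ → B₃.card = r →
      cmi F WA (B₁.sup W) (B₂.sup W ⊔ B₃.sup W) = cmi F WA (B₁.sup W) (B₃.sup W)) :
    mi F WA ((Finset.univ : Finset (Fin l)).sup W)
      = ∑ j ∈ Finset.univ.erase (⟨0, ht⟩ : Fin t),
          cmi F WA ((R j).sup W) ((R ⟨0, ht⟩).sup W) :=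
  modified_lemma1_groupwise_decomposition_general F V l t r ht WA W R R' hcard hcard' hdisj hdisj'
    hcover hL2 hL3
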